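/- Let A ⊆ [0,1] be a DCC set of non-negative numbers. Then the set B = {b ∈ A : b + a = 2 for some a ∈ A_∞} is finite. -/

import Mathlib

/-!
Since `A` is non-negative and DCC, the additive monoid it generates, which contains `A_∞`, is DCC
as well. If `B` were infinite it would contain a strictly increasing or strictly decreasing
sequence `bₙ`. It cannot decrease, as `B ⊆ A`; and if it increases, then `2 - bₙ` is strictly
decreasing in `A_∞`.
-/

/-- A set of reals satisfies the descending chain condition if it contains
no infinite strictly decreasing sequence. -/
def DCC (A : Set ℝ) : Prop := ∀ f : ℕ → ℝ, (∀ n, f n ∈ A) → ¬ StrictAnti f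

/-- `Ainf A` is `{0}` together with all finite sums of elements of `A`. -/
def Ainf (A : Set ℝ) : Set ℝ :=
  {0} ∪ {x | ∃ n : ℕ, 0 < n ∧ ∃ g : Fin n → ℝ, (∀ i, g i ∈ A) ∧ x = ∑ i, g i}

open Set

theorem DCC.isWF {A : Set ℝ} (h : DCC A) : A.IsWF :=
  isWF_iff_no_descending_seq.mpr fun f hf hA => h f hA hf

theorem ainf_subset_addSubmonoidClosure (A : Set ℝ) : Ainf A ⊆ AddSubmonoid.closure A := by
  rintro x (rfl | ⟨n, -, g, hg, rfl⟩)
  · exact zero_mem _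
  · exact sum_mem fun i _ => AddSubmonoid.subset_closure (hg i)

theorem Set.IsWF.ainf {A : Set ℝ} (hA : A.IsWF) (h0 : ∀ a ∈ A, 0 ≤ a) : (Ainf A).IsWF :=
  (hA.isPWO.addSubmonoid_closure h0).isWF.mono (ainf_subset_addSubmonoidClosure A)

theorem Set.IsWF.finite_sep_exists_add_eq {α : Type*} [AddCommGroup α] [LinearOrder α]
    [IsOrderedAddMonoid α] {s t : Set α} (hs : s.IsWF) (ht : t.IsWF) (c : α) :
    {b ∈ s | ∃ a ∈ t, b + a = c}.Finite := by
  set B := {b ∈ s | ∃ a ∈ t, b + a = c}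
  by_contra hinf
  have : Infinite B := (not_finite.mp hinf).to_subtype
  obtain ⟨f, hmono | hanti⟩ := Infinite.exists_strictMono_or_strictAnti B
  · have hcompl : ∀ n, c - (f n : α) ∈ t := fun n => by
      obtain ⟨a, ha, hba⟩ := (f n).2.2
      rwa [← hba, add_sub_cancel_left]
    have hcompl_anti : StrictAnti fun n => c - (f n : α) := fun _ _ hmn =>
      sub_lt_sub_left (Subtype.coe_lt_coe.mpr (hmono hmn)) c
    exact isWF_iff_no_descending_seq.mp ht _ hcompl_anti hcompl
  · exact isWF_iff_no_descending_seq.mp hs (fun n => f n) hanti fun n => (f n).2.1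

theorem finite_horizontal_coeffs (A : Set ℝ) (hA : A ⊆ Set.Icc 0 1)
    (h : DCC A) : {b ∈ A | ∃ a ∈ Ainf A, b + a = 2}.Finite :=
  h.isWF.finite_sep_exists_add_eq (h.isWF.ainf fun _ ha => (hA ha).1) 2
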